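/- Let A|B be an H-separable extension with B simple and A_B finitely generated projective. Then C_A(C_A(B)) = B. -/

import Mathlib

open TensorProduct

noncomputable section

namespace D2

variable (A : Type*) [Ring A] (B : Subring A)

/-- The defining relations of `A ⊗_B A` as a quotient of `A ⊗_ℤ A`. -/
def relSub : Submodule ℤ (A ⊗[ℤ] A) :=
  Submodule.span ℤ {x | ∃ (a c : A) (b : B), x = (a * (b : A)) ⊗ₜ[ℤ] c - a ⊗ₜ[ℤ] ((b : A) * c)}

/-- The tensor square `A ⊗_B A` of a ring extension `B ⊆ A`. -/
abbrev TensorSq := (A ⊗[ℤ] A) ⧸ relSub A B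

/-- The class of a simple tensor `a ⊗_B c`. -/
def tmulB (a c : A) : TensorSq A B := Submodule.Quotient.mk (a ⊗ₜ[ℤ] c)

/-- Left multiplication `a₀ • (x ⊗ y) = (a₀ x) ⊗ y` on `A ⊗_B A`. -/
def lmul (a : A) : TensorSq A B →ₗ[ℤ] TensorSq A B :=
  Submodule.mapQ _ _ (TensorProduct.map (LinearMap.mulLeft ℤ a) LinearMap.id) (by
    rw [relSub, Submodule.span_le]
    rintro x ⟨a', c, b, rfl⟩
    simp only [SetLike.mem_coe, Submodule.mem_comap, map_sub, TensorProduct.map_tmul,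
      LinearMap.mulLeft_apply, LinearMap.id_apply]
    refine Submodule.subset_span ⟨a * a', c, b, by erw [map_sub, TensorProduct.map_tmul, TensorProduct.map_tmul]; simp [mul_assoc]⟩)

/-- Right multiplication `(x ⊗ y) • a₀ = x ⊗ (y a₀)` on `A ⊗_B A`. -/
def rmul (a : A) : TensorSq A B →ₗ[ℤ] TensorSq A B :=
  Submodule.mapQ _ _ (TensorProduct.map LinearMap.id (LinearMap.mulRight ℤ a)) (by
    rw [relSub, Submodule.span_le]
    rintro x ⟨a', c, b, rfl⟩
    simp only [SetLike.mem_coe, Submodule.mem_comap, map_sub, TensorProduct.map_tmul,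
      LinearMap.mulRight_apply, LinearMap.id_apply]
    refine Submodule.subset_span ⟨a', c * a, b, by erw [map_sub, TensorProduct.map_tmul, TensorProduct.map_tmul]; simp [mul_assoc]⟩)

/-- The multiplication map `A ⊗_B A → A`, `x ⊗ y ↦ x y`. -/
def mulQ : TensorSq A B →ₗ[ℤ] A :=
  Submodule.liftQ _ (LinearMap.mul' ℤ A) (by
    rw [relSub, Submodule.span_le]
    rintro x ⟨a, c, b, rfl⟩
    show LinearMap.mul' ℤ A _ = 0
    simp [mul_assoc])

/-- An element `t` of `A ⊗_B A` is `B`-central when `b t = t b` for all `b ∈ B`. -/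
def IsBCentral (t : TensorSq A B) : Prop := ∀ b ∈ B, lmul A B b t = rmul A B b t

/-- An element `t` of `A ⊗_B A` is `A`-central (a Casimir element) when `a t = t a`. -/
def IsACentral (t : TensorSq A B) : Prop := ∀ a : A, lmul A B a t = rmul A B a t

/-- A `B`-`B`-bimodule endomorphism of `A`. -/
def IsBB (α : A →ₗ[ℤ] A) : Prop :=
  ∀ b ∈ B, ∀ a : A, α ((b : A) * a) = b * α a ∧ α (a * b) = α a * b

/-- A right `B`-module endomorphism of `A`. -/
def IsRightB (f : A →ₗ[ℤ] A) : Prop := ∀ a : A, ∀ b ∈ B, f (a * b) = f a * b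

/-- `x ↦ (x·) ⊗ id` as a linear map, used to build Sweedler-type expressions. -/
def lmulTen : A →ₗ[ℤ] (A ⊗[ℤ] A) →ₗ[ℤ] (A ⊗[ℤ] A) where
  toFun a := TensorProduct.map (LinearMap.mulLeft ℤ a) LinearMap.id
  map_add' a a' := by
    apply TensorProduct.ext'
    intro x y
    simp [add_mul, TensorProduct.add_tmul]; rfl
  map_smul' z a := by
    apply TensorProduct.ext'
    intro x y
    simp only [TensorProduct.map_tmul, LinearMap.mulLeft_apply, LinearMap.id_apply,
      LinearMap.smul_apply, RingHom.id_apply, smul_mul_assoc, TensorProduct.smul_tmul']; rfl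

/-- For `ζ = Σ u ⊗ v`, the map `a ↦ Σ α(a u) v`, i.e. `α(? ζ¹) ζ²`. -/
def sweed (α : A →ₗ[ℤ] A) (ζ : A ⊗[ℤ] A) : A →ₗ[ℤ] A :=
  ((LinearMap.mul' ℤ A).comp (TensorProduct.map α LinearMap.id)).comp ((lmulTen A).flip ζ)

/-- For `ζ = Σ u ⊗ v`, the element `Σ u r v` ("sandwich" evaluation `ζ¹ r ζ²`). -/
def sandw (r : A) (ζ : A ⊗[ℤ] A) : A :=
  (LinearMap.mul' ℤ A) ((TensorProduct.map (LinearMap.mulRight ℤ r) LinearMap.id) ζ)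

/-- `mul₂ ζ ξ = Σ (u x) ⊗ (y v)` for `ζ = Σ u ⊗ v`, `ξ = Σ x ⊗ y`:
the product `ξ ·_T ζ` of two elements of `T = (A ⊗_B A)^B` on representatives. -/
def mul₂ : (A ⊗[ℤ] A) →ₗ[ℤ] (A ⊗[ℤ] A) →ₗ[ℤ] (A ⊗[ℤ] A) :=
  TensorProduct.lift <| LinearMap.mk₂ ℤ
    (fun u v => TensorProduct.map (LinearMap.mulLeft ℤ u) (LinearMap.mulRight ℤ v))
    (fun u u' v => by
      apply TensorProduct.ext'
      intro x y
      simp [add_mul, TensorProduct.add_tmul]; rfl)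
    (fun z u v => by
      apply TensorProduct.ext'
      intro x y
      simp only [TensorProduct.map_tmul, LinearMap.mulLeft_apply, LinearMap.mulRight_apply,
        LinearMap.smul_apply, smul_mul_assoc, TensorProduct.smul_tmul']; rfl)
    (fun u v v' => by
      apply TensorProduct.ext'
      intro x y
      simp [mul_add, TensorProduct.tmul_add]; rfl)
    (fun z u v => by
      apply TensorProduct.ext'
      intro x y
      simp only [TensorProduct.map_tmul, LinearMap.mulLeft_apply, LinearMap.mulRight_apply,
        LinearMap.smul_apply, mul_smul_comm, TensorProduct.tmul_smul]; rfl)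

/-- `A` is balanced as a right `B`-module. -/
def RightBalanced : Prop :=
  ∀ φ : A →+ A,
    (∀ f : A →+ A, (∀ a : A, ∀ b ∈ B, f (a * b) = f a * b) → ∀ a, φ (f a) = f (φ a)) →
    ∃ b ∈ B, ∀ a, φ a = a * b

end D2

end



open TensorProduct

namespace D2Aux

open D2

variable {A : Type*} [Ring A] (B : Subring A)

lemma lmul_mk (a : A) (t : A ⊗[ℤ] A) :
    D2.lmul A B a (Submodule.Quotient.mk t) =
      Submodule.Quotient.mk (TensorProduct.map (LinearMap.mulLeft ℤ a) LinearMap.id t) :=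
  Submodule.mapQ_apply _ _ _ _

lemma rmul_mk (a : A) (t : A ⊗[ℤ] A) :
    D2.rmul A B a (Submodule.Quotient.mk t) =
      Submodule.Quotient.mk (TensorProduct.map LinearMap.id (LinearMap.mulRight ℤ a) t) :=
  Submodule.mapQ_apply _ _ _ _

lemma lmul_lmul (a a' : A) (t : D2.TensorSq A B) :
    D2.lmul A B a (D2.lmul A B a' t) = D2.lmul A B (a * a') t := by
  obtain ⟨u, rfl⟩ := Submodule.Quotient.mk_surjective _ t
  rw [lmul_mk, lmul_mk, lmul_mk]
  congr 1
  rw [← LinearMap.comp_apply, ← TensorProduct.map_comp, LinearMap.mulLeft_mul,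
    LinearMap.id_comp]

/-- Lift of `x ⊗ y ↦ f x * y` to the tensor square, for `f` right `B`-linear. -/
noncomputable def liftRB (f : A →ₗ[ℤ] A) (hf : D2.IsRightB A B f) : D2.TensorSq A B →ₗ[ℤ] A :=
  Submodule.liftQ _ ((LinearMap.mul' ℤ A).comp (TensorProduct.map f LinearMap.id)) (by
    rw [D2.relSub, Submodule.span_le]
    rintro x ⟨a, c, b, rfl⟩
    show (LinearMap.mul' ℤ A) (TensorProduct.map f LinearMap.id
      ((a * (b : A)) ⊗ₜ[ℤ] c - a ⊗ₜ[ℤ] ((b : A) * c))) = 0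
    simp only [map_sub, TensorProduct.map_tmul, LinearMap.id_apply, LinearMap.mul'_apply]
    rw [hf a b b.2, mul_assoc, sub_self])

lemma liftRB_mk (f : A →ₗ[ℤ] A) (hf : D2.IsRightB A B f) (x y : A) :
    liftRB B f hf (Submodule.Quotient.mk (x ⊗ₜ[ℤ] y)) = f x * y := by
  rw [liftRB, Submodule.liftQ_apply]
  show LinearMap.mul' ℤ A (TensorProduct.map f LinearMap.id (x ⊗ₜ[ℤ] y)) = f x * y
  simp

lemma liftRB_rmul (f : A →ₗ[ℤ] A) (hf : D2.IsRightB A B f) (a : A) (t : D2.TensorSq A B) :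
    liftRB B f hf (D2.rmul A B a t) = liftRB B f hf t * a := by
  obtain ⟨u, rfl⟩ := Submodule.Quotient.mk_surjective _ t
  rw [rmul_mk]
  induction u using TensorProduct.induction_on with
  | zero => simp
  | tmul x y =>
      rw [TensorProduct.map_tmul, LinearMap.id_apply, LinearMap.mulRight_apply,
        liftRB_mk, liftRB_mk, mul_assoc]
  | add u v hu hv =>
      rw [map_add, Submodule.Quotient.mk_add, map_add, Submodule.Quotient.mk_add, map_add,
        hu, hv, add_mul]

/-- The key identity: for right `B`-linear `f` and `d` commuting with all the `r i`,
an H-separability system gives `f d = f 1 * d`. -/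
lemma key (f : A →ₗ[ℤ] A) (hf : D2.IsRightB A B f)
    {n : ℕ} (e : Fin n → A ⊗[ℤ] A) (r : Fin n → A)
    (hce : ∀ i, D2.IsACentral A B (Submodule.Quotient.mk (e i)))
    (hsys : ∑ i, D2.lmul A B (r i) (Submodule.Quotient.mk (e i)) = D2.tmulB A B 1 1)
    (d : A) (hdcomm : ∀ i, d * r i = r i * d) :
    f d = f 1 * d := by
  have h1 : (Submodule.Quotient.mk ((1:A) ⊗ₜ[ℤ] (1:A)) : D2.TensorSq A B) =
      ∑ i, D2.lmul A B (r i) (Submodule.Quotient.mk (e i)) := hsys.symm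
  have hf1 : f 1 = ∑ i, liftRB B f hf (Submodule.Quotient.mk (e i)) * r i := by
    have h0 : f 1 = liftRB B f hf (Submodule.Quotient.mk ((1:A) ⊗ₜ[ℤ] 1)) := by
      rw [liftRB_mk, mul_one]
    rw [h0, h1, map_sum]
    refine Finset.sum_congr rfl fun i _ => ?_
    rw [hce i (r i), liftRB_rmul]
  have hfd : f d = ∑ i, liftRB B f hf (Submodule.Quotient.mk (e i)) * r i * d := by
    have h0 : f d = liftRB B f hf (Submodule.Quotient.mk (d ⊗ₜ[ℤ] 1)) := by
      rw [liftRB_mk, mul_one]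
    have h2 : (Submodule.Quotient.mk (d ⊗ₜ[ℤ] (1:A)) : D2.TensorSq A B) =
        ∑ i, D2.lmul A B (d * r i) (Submodule.Quotient.mk (e i)) := by
      have h3 := congrArg (D2.lmul A B d) h1
      rw [lmul_mk, map_sum] at h3
      simp only [lmul_lmul] at h3
      simpa using h3
    rw [h0, h2, map_sum]
    refine Finset.sum_congr rfl fun i _ => ?_
    rw [hce i (d * r i), liftRB_rmul, hdcomm i, ← mul_assoc]
  rw [hfd, hf1, Finset.sum_mul]

end D2Aux

open TensorProduct in
/-- an H-separable extension of a simple ring `B` with `A_B` f.g. projective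
satisfies the double centralizer property. -/
theorem stmt12 {A : Type*} [Ring A] (B : Subring A)
    (hBsimple : IsSimpleRing B)
    (N : ℕ) (aB : Fin N → A) (fB : Fin N → (A →ₗ[ℤ] A))
    (hfB : ∀ j, D2.IsRightB A B (fB j)) (hfBval : ∀ j a, fB j a ∈ B)
    (hdb : ∀ a : A, a = ∑ j, aB j * fB j a)
    (n : ℕ) (e : Fin n → A ⊗[ℤ] A) (r : Fin n → A)
    (hce : ∀ i, D2.IsACentral A B (Submodule.Quotient.mk (e i)))
    (hr : ∀ i, r i ∈ Subring.centralizer (B : Set A))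
    (hsys : ∑ i, D2.lmul A B (r i) (Submodule.Quotient.mk (e i)) = D2.tmulB A B 1 1) :
    Subring.centralizer ((Subring.centralizer (B : Set A) : Subring A) : Set A) = B := by
  haveI := hBsimple.simple
  apply le_antisymm
  · -- hard direction
    intro d hd
    rw [Subring.mem_centralizer_iff] at hd
    have hdcomm : ∀ i, d * r i = r i * d := fun i => (hd (r i) (hr i)).symm
    -- the two-sided ideal of `B` of values at 1 of right `B`-linear maps `A → B`
    set S : Set B := {b : B | ∃ f : A →ₗ[ℤ] A,
      D2.IsRightB A B f ∧ (∀ x, f x ∈ B) ∧ f 1 = (b : A)} with hS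
    have hzero : (0 : B) ∈ S := ⟨0, fun a b _ => by simp, fun x => by simpa using B.zero_mem, by simp⟩
    have hadd : ∀ {x y : B}, x ∈ S → y ∈ S → x + y ∈ S := by
      rintro x y ⟨f, hf, hfv, hf1⟩ ⟨g, hg, hgv, hg1⟩
      refine ⟨f + g, fun a b hb => ?_, fun z => ?_, ?_⟩
      · simp only [LinearMap.add_apply]
        rw [(hf a b hb : f (a * b) = f a * b), (hg a b hb : g (a * b) = g a * b), add_mul]
      · simpa using add_mem (hfv z) (hgv z)
      · simp [hf1, hg1]
    have hneg : ∀ {x : B}, x ∈ S → -x ∈ S := by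
      rintro x ⟨f, hf, hfv, hf1⟩
      refine ⟨-f, fun a b hb => ?_, fun z => ?_, ?_⟩
      · simp only [LinearMap.neg_apply]
        rw [(hf a b hb : f (a * b) = f a * b), neg_mul]
      · simpa using neg_mem (hfv z)
      · simp [hf1]
    have hml : ∀ {x y : B}, y ∈ S → x * y ∈ S := by
      rintro x y ⟨f, hf, hfv, hf1⟩
      refine ⟨(LinearMap.mulLeft ℤ (x : A)).comp f, fun a b hb => ?_, fun z => ?_, ?_⟩
      · simp only [LinearMap.coe_comp, Function.comp_apply, LinearMap.mulLeft_apply]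
        rw [(hf a b hb : f (a * b) = f a * b), mul_assoc]
      · simpa using mul_mem x.2 (hfv z)
      · simp [hf1]
    have hmr : ∀ {x y : B}, x ∈ S → x * y ∈ S := by
      rintro x y ⟨f, hf, hfv, hf1⟩
      refine ⟨f.comp (LinearMap.mulLeft ℤ (y : A)), fun a b hb => ?_, fun z => ?_, ?_⟩
      · simp only [LinearMap.coe_comp, Function.comp_apply, LinearMap.mulLeft_apply]
        rw [← mul_assoc, (hf ((y : A) * a) b hb : f ((y : A) * a * b) = f ((y : A) * a) * b)]
      · simpa using hfv _
      · simp only [LinearMap.coe_comp, Function.comp_apply, LinearMap.mulLeft_apply, mul_one]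
        have : f ((y : A)) = f (1 * (y : A)) := by rw [one_mul]
        rw [this, (hf 1 y y.2 : f (1 * (y : A)) = f 1 * y), hf1]
        push_cast
        ring_nf
    set I : TwoSidedIdeal B := TwoSidedIdeal.mk' S hzero hadd hneg hml hmr with hI
    rcases eq_bot_or_eq_top I with hbot | htop
    · -- contradiction: B would be trivial
      exfalso
      have hzeroall : ∀ j, fB j 1 = 0 := by
        intro j
        have hmem : (⟨fB j 1, hfBval j 1⟩ : B) ∈ I := by
          rw [hI, TwoSidedIdeal.mem_mk']
          exact ⟨fB j, hfB j, hfBval j, rfl⟩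
        rw [hbot, TwoSidedIdeal.mem_bot] at hmem
        exact congrArg Subtype.val hmem
      have h10 : (1 : A) = 0 := by
        have := hdb 1
        simp only [hzeroall, mul_zero, Finset.sum_const_zero] at this
        exact this
      have : (1 : B) = 0 := Subtype.ext h10
      exact one_ne_zero this
    · -- 1 ∈ I gives a right B-linear F : A → B with F 1 = 1
      have hmem : (1 : B) ∈ I := by rw [htop]; trivial
      rw [hI, TwoSidedIdeal.mem_mk'] at hmem
      obtain ⟨F, hF, hFv, hF1⟩ := hmem
      have hkey := D2Aux.key B F hF e r hce hsys d hdcomm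
      rw [hF1] at hkey
      have : F d = d := by rw [hkey]; push_cast; rw [one_mul]
      rw [← this]
      exact hFv d
  · intro b hb
    rw [Subring.mem_centralizer_iff]
    intro c hc
    exact (Subring.mem_centralizer_iff.1 hc b hb).symm
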